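/- For every θ ∈ ℝ^K, if the rewards have no ties (so Δ := min_{i ≠ j} |r(i) − r(j)| > 0) and k is an action maximizing π_θ over {1,…,K}, then Σ_{a=1}^K π_θ(a)·(r(a) − π_θ^⊤r)² ≥ (Δ²/K)·(1 − π_θ(k)). Combined with the gradient-variance bound this yields 1 − π_θ(k) ≤ (2·R_max·K^{3/2}/Δ²)·‖∇(θ)‖₂ when r ∈ [−R_max, R_max]^K. -/

import Mathlib

open MeasureTheory Finset Real

/-- Softmax policy. -/
noncomputable def softmax {K : ℕ} (θ : Fin K → ℝ) (a : Fin K) : ℝ :=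
  Real.exp (θ a) / ∑ a' : Fin K, Real.exp (θ a')

/-- Expected reward `π_θ^⊤ r`. -/
noncomputable def value {K : ℕ} (r θ : Fin K → ℝ) : ℝ :=
  ∑ a : Fin K, softmax θ a * r a

/-- True gradient of `θ ↦ π_θ^⊤ r`. -/
noncomputable def pgrad {K : ℕ} (r θ : Fin K → ℝ) (a : Fin K) : ℝ :=
  softmax θ a * (r a - value r θ)

/-- Euclidean norm on `ℝ^K`. -/
noncomputable def norm2 {K : ℕ} (v : Fin K → ℝ) : ℝ :=
  Real.sqrt (∑ a : Fin K, (v a) ^ 2)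

/-! Write `E` for the mean under `π = π_θ`. Taking `c = r k`, the parallel-axis identity
`Var = E (r - c)² - (E r - c)²` and Cauchy–Schwarz over the actions `a ≠ k`, which carry mass
`1 - π k`, give `Var ≥ π k · E (r - r k)² ≥ π k · Δ² (1 - π k)`, and `π k ≥ 1/K` because `k` is a
mode of `π`. For the second bound, `Var = Σ (r a - E r) ∇ a` with `|r a - E r| ≤ 2 R_max`, so
Cauchy–Schwarz bounds it by `2 R_max √K ‖∇‖₂`. -/

section ProbabilityWeights

variable {ι : Type*} [Fintype ι] {p : ι → ℝ}

theorem sum_mul_sq_sub_eq_add_sq (hp : ∑ a, p a = 1) (x : ι → ℝ) (c : ℝ) :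
    ∑ a, p a * (x a - c) ^ 2
      = ∑ a, p a * (x a - ∑ b, p b * x b) ^ 2 + (∑ b, p b * x b - c) ^ 2 := by
  set m := ∑ b, p b * x b
  have expand : ∀ a, p a * (x a - c) ^ 2
      = p a * (x a - m) ^ 2 + 2 * (m - c) * (p a * x a) + ((m - c) ^ 2 - 2 * (m - c) * m) * p a :=
    fun a => by ring
  simp only [expand, sum_add_distrib, ← mul_sum, hp]
  ring

theorem one_div_card_le_of_forall_le (hp : ∑ a, p a = 1) {k : ι} (hk : ∀ a, p a ≤ p k) :
    1 / (Fintype.card ι : ℝ) ≤ p k := by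
  have hsum : 1 ≤ Fintype.card ι * p k := by
    simpa [hp] using sum_le_sum fun a (_ : a ∈ univ) => hk a
  have hcard : (0 : ℝ) < Fintype.card ι := by
    exact_mod_cast Fintype.card_pos_iff.2 ⟨k⟩
  rw [div_le_iff₀ hcard]
  linarith

variable (hp0 : ∀ a, 0 ≤ p a) (hp1 : ∑ a, p a = 1)
include hp0 hp1

theorem mul_sum_mul_sq_sub_le [DecidableEq ι] (x : ι → ℝ) (k : ι) :
    p k * ∑ a, p a * (x a - x k) ^ 2 ≤ ∑ a, p a * (x a - ∑ b, p b * x b) ^ 2 := by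
  set T := ∑ a, p a * (x a - x k) ^ 2
  have steiner := sum_mul_sq_sub_eq_add_sq hp1 x (x k)
  have hshift : ∑ b, p b * x b - x k = ∑ a ∈ univ.erase k, p a * (x a - x k) := by
    rw [sum_erase _ (by simp)]
    simp only [mul_sub, sum_sub_distrib, ← sum_mul, hp1, one_mul]
  have hT : T = ∑ a ∈ univ.erase k, p a * (x a - x k) ^ 2 := by
    rw [sum_erase _ (by simp)]
  have hmass : ∑ a ∈ univ.erase k, p a = 1 - p k := by
    rw [sum_erase_eq_sub (mem_univ k), hp1]
  have cauchy_schwarz : (∑ b, p b * x b - x k) ^ 2 ≤ (1 - p k) * T := by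
    rw [hshift, hT, ← hmass]
    exact sum_sq_le_sum_mul_sum_of_sq_le_mul _ (fun a _ => hp0 a)
      (fun a _ => mul_nonneg (hp0 a) (sq_nonneg _)) (fun a _ => le_of_eq (by ring))
  linarith

theorem sq_div_card_mul_one_sub_le_sum_mul_sq_sub [DecidableEq ι] {x : ι → ℝ} {Δ : ℝ}
    (hΔ : 0 ≤ Δ) (hgap : ∀ i j, i ≠ j → Δ ≤ |x i - x j|) {k : ι} (hk : ∀ a, p a ≤ p k) :
    Δ ^ 2 / Fintype.card ι * (1 - p k) ≤ ∑ a, p a * (x a - ∑ b, p b * x b) ^ 2 := by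
  have hmass : 1 - p k = ∑ a ∈ univ.erase k, p a := by
    rw [sum_erase_eq_sub (mem_univ k), hp1]
  have hT : Δ ^ 2 * (1 - p k) ≤ ∑ a, p a * (x a - x k) ^ 2 := by
    rw [hmass, mul_sum, ← sum_erase (f := fun a => p a * (x a - x k) ^ 2) (a := k) univ (by simp)]
    refine sum_le_sum fun a ha => ?_
    have hsq : Δ ^ 2 ≤ (x a - x k) ^ 2 := by
      rw [← sq_abs (x a - x k)]
      exact pow_le_pow_left₀ hΔ (hgap a k (ne_of_mem_erase ha)) 2
    nlinarith [hp0 a]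
  have hpk : p k ≤ 1 := by
    rw [← hp1]
    exact single_le_sum (fun a _ => hp0 a) (mem_univ k)
  calc Δ ^ 2 / Fintype.card ι * (1 - p k)
      = 1 / Fintype.card ι * (Δ ^ 2 * (1 - p k)) := by ring
    _ ≤ p k * (Δ ^ 2 * (1 - p k)) :=
        mul_le_mul_of_nonneg_right (one_div_card_le_of_forall_le hp1 hk)
          (mul_nonneg (sq_nonneg Δ) (by linarith))
    _ ≤ p k * ∑ a, p a * (x a - x k) ^ 2 := by gcongr; exact hp0 k
    _ ≤ _ := mul_sum_mul_sq_sub_le hp0 hp1 x k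

theorem abs_sub_sum_mul_le {x : ι → ℝ} {B : ℝ} (hx : ∀ a, |x a| ≤ B) (a : ι) :
    |x a - ∑ b, p b * x b| ≤ 2 * B := by
  have hmean : |∑ b, p b * x b| ≤ B :=
    calc |∑ b, p b * x b| ≤ ∑ b, p b * |x b| := by
          refine (abs_sum_le_sum_abs _ _).trans_eq (sum_congr rfl fun b _ => ?_)
          rw [abs_mul, abs_of_nonneg (hp0 b)]
      _ ≤ ∑ b, p b * B := by
          gcongr with b
          · exact hp0 b
          · exact hx b
      _ = B := by rw [← sum_mul, hp1, one_mul]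
  linarith [abs_sub (x a) (∑ b, p b * x b), hx a]

end ProbabilityWeights

theorem sum_mul_le_mul_sqrt_card_mul_sqrt {ι : Type*} [Fintype ι] {x : ι → ℝ} {B : ℝ}
    (hB : 0 ≤ B) (hx : ∀ a, |x a| ≤ B) (g : ι → ℝ) :
    ∑ a, x a * g a ≤ B * √(Fintype.card ι) * √(∑ a, g a ^ 2) := by
  have hsq : ∑ a, x a ^ 2 ≤ Fintype.card ι * B ^ 2 := by
    simpa using sum_le_sum fun a (_ : a ∈ univ) =>
      sq_le_sq' (abs_le.1 (hx a)).1 (abs_le.1 (hx a)).2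
  calc ∑ a, x a * g a ≤ √(∑ a, x a ^ 2) * √(∑ a, g a ^ 2) := sum_mul_le_sqrt_mul_sqrt _ _ _
    _ ≤ √(Fintype.card ι * B ^ 2) * √(∑ a, g a ^ 2) := by gcongr
    _ = B * √(Fintype.card ι) * √(∑ a, g a ^ 2) := by
        rw [sqrt_mul (Nat.cast_nonneg _), sqrt_sq hB, mul_comm B]

theorem softmax_nonneg {K : ℕ} (θ : Fin K → ℝ) (a : Fin K) : 0 ≤ softmax θ a := by
  unfold softmax
  positivity

theorem sum_softmax {K : ℕ} [NeZero K] (θ : Fin K → ℝ) : ∑ a, softmax θ a = 1 := by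
  simp only [softmax, ← sum_div]
  exact div_self (sum_pos (fun a _ => exp_pos _) univ_nonempty).ne'

theorem sum_softmax_mul_sq_sub_value {K : ℕ} (r θ : Fin K → ℝ) :
    ∑ a, softmax θ a * (r a - value r θ) ^ 2 = ∑ a, (r a - value r θ) * pgrad r θ a := by
  simp only [pgrad]
  exact sum_congr rfl fun a _ => by ring

theorem variance_lower_bound_and_plateau_general
    (K : ℕ) (Rmax : ℝ)
    (r : Fin K → ℝ) (hr : ∀ a, r a ∈ Set.Icc (-Rmax) Rmax)
    (Δ : ℝ) (hΔpos : 0 < Δ)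
    (hΔle : ∀ i j : Fin K, i ≠ j → Δ ≤ |r i - r j|)
    (θ : Fin K → ℝ) (k : Fin K) (hk : ∀ a, softmax θ a ≤ softmax θ k) :
    (Δ ^ 2 / K) * (1 - softmax θ k)
        ≤ ∑ a : Fin K, softmax θ a * (r a - value r θ) ^ 2
      ∧ 1 - softmax θ k
        ≤ (2 * Rmax * (K : ℝ) ^ ((3 : ℝ) / 2) / Δ ^ 2) * norm2 (pgrad r θ) := by
  have : NeZero K := ⟨k.pos.ne'⟩
  have hp0 := softmax_nonneg θ
  have hp1 := sum_softmax θ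
  have hvar : Δ ^ 2 / K * (1 - softmax θ k) ≤ ∑ a, softmax θ a * (r a - value r θ) ^ 2 := by
    have hgen := sq_div_card_mul_one_sub_le_sum_mul_sq_sub hp0 hp1 hΔpos.le hΔle hk
    rwa [Fintype.card_fin] at hgen
  refine ⟨hvar, ?_⟩
  have hB : ∀ a, |r a| ≤ Rmax := fun a => abs_le.2 (hr a)
  have hdev : ∀ a, |r a - value r θ| ≤ 2 * Rmax := abs_sub_sum_mul_le hp0 hp1 hB
  have hK : (0 : ℝ) < K := by exact_mod_cast k.pos
  have hK32 : (K : ℝ) ^ ((3 : ℝ) / 2) = K * √K := by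
    rw [show (3 : ℝ) / 2 = 1 + 1 / 2 by norm_num, rpow_add hK, rpow_one, sqrt_eq_rpow]
  calc 1 - softmax θ k = K / Δ ^ 2 * (Δ ^ 2 / K * (1 - softmax θ k)) := by field_simp
    _ ≤ K / Δ ^ 2 * ∑ a, (r a - value r θ) * pgrad r θ a := by
        rw [← sum_softmax_mul_sq_sub_value]; gcongr
    _ ≤ K / Δ ^ 2 * (2 * Rmax * √K * norm2 (pgrad r θ)) := by
        gcongr
        simpa [norm2] using sum_mul_le_mul_sqrt_card_mul_sqrt
          (by linarith [(abs_nonneg _).trans (hB k)]) hdev (pgrad r θ)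
    _ = _ := by rw [hK32]; ring

/-- If the rewards have no ties (with minimal gap `Δ > 0`) and `k` maximizes `π_θ`, then the
reward variance is at least `(Δ²/K)(1 − π_θ(k))`, and consequently
`1 − π_θ(k) ≤ (2 R_max K^{3/2}/Δ²)·‖∇(θ)‖₂`. -/
theorem variance_lower_bound_and_plateau
    (K : ℕ) (hK : 2 ≤ K) (Rmax : ℝ) (hRmax : 0 < Rmax)
    (r : Fin K → ℝ) (hr : ∀ a, r a ∈ Set.Icc (-Rmax) Rmax)
    (hties : ∀ i j : Fin K, i ≠ j → r i ≠ r j)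
    (Δ : ℝ) (hΔpos : 0 < Δ)
    (hΔle : ∀ i j : Fin K, i ≠ j → Δ ≤ |r i - r j|)
    (hΔmem : ∃ i j : Fin K, i ≠ j ∧ Δ = |r i - r j|)
    (θ : Fin K → ℝ) (k : Fin K) (hk : ∀ a, softmax θ a ≤ softmax θ k) :
    (Δ ^ 2 / K) * (1 - softmax θ k)
        ≤ ∑ a : Fin K, softmax θ a * (r a - value r θ) ^ 2
      ∧ 1 - softmax θ k
        ≤ (2 * Rmax * (K : ℝ) ^ ((3 : ℝ) / 2) / Δ ^ 2) * norm2 (pgrad r θ) :=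
  variance_lower_bound_and_plateau_general K Rmax r hr Δ hΔpos hΔle θ k hk
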